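/- Let 1 ≤ k ≤ p (with p ≥ 2). If h ∈ 𝒪(p,k) satisfies hβ̃₁ = β̃₁, then h maps U := Span{β₂,…,β_p, β̃₂,…,β̃_p} onto itself, and the map h ↦ h|_U is a group isomorphism from the isotropy subgroup {h ∈ 𝒪(p,k) : hβ̃₁ = β̃₁} onto 𝒪(p−1, k−1), where 𝒪(p−1,k−1) is formed on U with basis vectors relabeled β_i ↦ β_{i−1}, β̃_i ↦ β̃_{i−1} for 2 ≤ i ≤ p. -/
import Mathlib


/-- 𝒲(p) := ℝ^{2p}; `Sum.inl i` labels the basis vector β_{i+1} and `Sum.inr i` labels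
β̃_{i+1} (0-based indexing). -/
abbrev Wc (p : ℕ) : Type := (Fin p ⊕ Fin p) → ℝ

/-- The basis vectors β_i (`Sum.inl`) and β̃_i (`Sum.inr`) of 𝒲(p). -/
noncomputable def bb (p : ℕ) (s : Fin p ⊕ Fin p) : Wc p := fun t => if t = s then 1 else 0

/-- The symmetric bilinear form on 𝒲(p): ⟨β_i,β_j⟩ = ⟨β̃_i,β̃_j⟩ = 0, ⟨β_i,β̃_j⟩ = δ_{ij}. -/
noncomputable def wip (p : ℕ) (u v : Wc p) : ℝ :=
  ∑ i : Fin p, (u (Sum.inl i) * v (Sum.inr i) + u (Sum.inr i) * v (Sum.inl i))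

/-- `Ocal p k h` means `h ∈ 𝒪(p,k)`: `h` preserves ⟨·,·⟩ and fixes β_1, …, β_k. -/
def Ocal (p k : ℕ) (h : Wc p ≃ₗ[ℝ] Wc p) : Prop :=
  (∀ u v : Wc p, wip p (h u) (h v) = wip p u v) ∧
    ∀ i : Fin p, (i : ℕ) < k → h (bb p (Sum.inl i)) = bb p (Sum.inl i)

/-- The subspace U := Span{β_2,…,β_p, β̃_2,…,β̃_p} of 𝒲(q+1). -/
def Usub (q : ℕ) : Submodule ℝ (Wc (q + 1)) :=
  Submodule.span ℝ {v : Wc (q + 1) |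
    (∃ i : Fin q, v = bb (q + 1) (Sum.inl i.succ)) ∨
      ∃ i : Fin q, v = bb (q + 1) (Sum.inr i.succ)}

/-- The inclusion 𝒲(q) → 𝒲(q+1) onto U, relabeling β_i ↦ β_{i+1}, β̃_i ↦ β̃_{i+1}. -/
noncomputable def extW (q : ℕ) (w : Wc q) : Wc (q + 1) := fun s =>
  match s with
  | Sum.inl j => Fin.cases 0 (fun i => w (Sum.inl i)) j
  | Sum.inr j => Fin.cases 0 (fun i => w (Sum.inr i)) j

/-- The restriction to U ≅ 𝒲(q) (with relabeled basis) of a map `h` of 𝒲(q+1). -/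
noncomputable def resS (q : ℕ) (h : Wc (q + 1) → Wc (q + 1)) (w : Wc q) : Wc q := fun s =>
  match s with
  | Sum.inl i => h (extW q w) (Sum.inl i.succ)
  | Sum.inr i => h (extW q w) (Sum.inr i.succ)

namespace S15

variable {q l : ℕ}

def resV (q : ℕ) (u : Wc (q + 1)) : Wc q := fun s =>
  match s with
  | Sum.inl i => u (Sum.inl i.succ)
  | Sum.inr i => u (Sum.inr i.succ)

lemma resS_eq (f : Wc (q+1) → Wc (q+1)) (w : Wc q) : resS q f w = resV q (f (extW q w)) := by
  funext s; cases s <;> rfl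

@[simp] lemma extW_inl_zero (w : Wc q) : extW q w (Sum.inl 0) = 0 := by simp [extW]
@[simp] lemma extW_inr_zero (w : Wc q) : extW q w (Sum.inr 0) = 0 := by simp [extW]
@[simp] lemma extW_inl_succ (w : Wc q) (i : Fin q) : extW q w (Sum.inl i.succ) = w (Sum.inl i) := by
  simp [extW]
@[simp] lemma extW_inr_succ (w : Wc q) (i : Fin q) : extW q w (Sum.inr i.succ) = w (Sum.inr i) := by
  simp [extW]

@[simp] lemma resV_inl (u : Wc (q+1)) (i : Fin q) : resV q u (Sum.inl i) = u (Sum.inl i.succ) := rfl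
@[simp] lemma resV_inr (u : Wc (q+1)) (i : Fin q) : resV q u (Sum.inr i) = u (Sum.inr i.succ) := rfl

@[simp] lemma resV_extW (w : Wc q) : resV q (extW q w) = w := by
  funext s; cases s <;> simp

lemma extW_resV {u : Wc (q+1)} (h0 : u (Sum.inl 0) = 0) (h1 : u (Sum.inr 0) = 0) :
    extW q (resV q u) = u := by
  funext s
  rcases s with j | j <;> induction j using Fin.cases <;> simp [h0, h1]

lemma resV_add (u v : Wc (q+1)) : resV q (u + v) = resV q u + resV q v := by
  funext s; cases s <;> rfl
lemma resV_smul (a : ℝ) (u : Wc (q+1)) : resV q (a • u) = a • resV q u := by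
  funext s; cases s <;> rfl
lemma extW_add (u v : Wc q) : extW q (u + v) = extW q u + extW q v := by
  funext s; rcases s with j | j <;> induction j using Fin.cases <;> simp
lemma extW_smul (a : ℝ) (u : Wc q) : extW q (a • u) = a • extW q u := by
  funext s; rcases s with j | j <;> induction j using Fin.cases <;> simp

@[simp] lemma extW_zero : extW q (0 : Wc q) = 0 := by
  funext s; rcases s with j | j <;> induction j using Fin.cases <;> simp

lemma wip_eval_inl (p : ℕ) (u : Wc p) (j : Fin p) :
    wip p u (bb p (Sum.inl j)) = u (Sum.inr j) := by
  simp [wip, bb, mul_ite, Finset.sum_add_distrib]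

lemma wip_eval_inr (p : ℕ) (u : Wc p) (j : Fin p) :
    wip p u (bb p (Sum.inr j)) = u (Sum.inl j) := by
  simp [wip, bb, mul_ite, Finset.sum_add_distrib]

lemma wip_split (u v : Wc (q+1)) :
    wip (q+1) u v = u (Sum.inl 0) * v (Sum.inr 0) + u (Sum.inr 0) * v (Sum.inl 0)
      + wip q (resV q u) (resV q v) := by
  simp [wip, Fin.sum_univ_succ, resV]

@[simp] lemma resV_bb_inl_succ (i : Fin q) :
    resV q (bb (q+1) (Sum.inl i.succ)) = bb q (Sum.inl i) := by
  funext s; rcases s with j | j <;> simp [bb, Fin.succ_inj]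

@[simp] lemma resV_bb_inr_succ (i : Fin q) :
    resV q (bb (q+1) (Sum.inr i.succ)) = bb q (Sum.inr i) := by
  funext s; rcases s with j | j <;> simp [bb, Fin.succ_inj]

@[simp] lemma resV_bb_inl_zero : resV q (bb (q+1) (Sum.inl 0)) = 0 := by
  funext s; rcases s with j | j <;> simp [bb, (Fin.succ_ne_zero _)]

@[simp] lemma resV_bb_inr_zero : resV q (bb (q+1) (Sum.inr 0)) = 0 := by
  funext s; rcases s with j | j <;> simp [bb, (Fin.succ_ne_zero _)]

lemma extW_bb_inl (i : Fin q) : extW q (bb q (Sum.inl i)) = bb (q+1) (Sum.inl i.succ) := by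
  funext s; rcases s with j | j <;> induction j using Fin.cases <;>
    simp [bb, Fin.succ_inj, (Fin.succ_ne_zero _).symm]

lemma extW_bb_inr (i : Fin q) : extW q (bb q (Sum.inr i)) = bb (q+1) (Sum.inr i.succ) := by
  funext s; rcases s with j | j <;> induction j using Fin.cases <;>
    simp [bb, Fin.succ_inj, (Fin.succ_ne_zero _).symm]

lemma decomp (u : Wc (q+1)) :
    u (Sum.inl 0) • bb (q+1) (Sum.inl 0) + u (Sum.inr 0) • bb (q+1) (Sum.inr 0)
      + extW q (resV q u) = u := by
  funext s; rcases s with j | j <;> induction j using Fin.cases <;>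
    simp [bb, (Fin.succ_ne_zero _)]


lemma Ocal.symm {p k : ℕ} {h : Wc p ≃ₗ[ℝ] Wc p} (hO : Ocal p k h) : Ocal p k h.symm := by
  constructor
  · intro u v
    have := hO.1 (h.symm u) (h.symm v)
    simpa using this.symm
  · intro i hi
    have := hO.2 i hi
    exact h.symm_apply_eq.mpr this.symm

lemma fix_symm {p : ℕ} {h : Wc p ≃ₗ[ℝ] Wc p} {x : Wc p} (hx : h x = x) : h.symm x = x := by
  exact h.symm_apply_eq.mpr hx.symm

lemma boundary_inr {h : Wc (q+1) ≃ₗ[ℝ] Wc (q+1)} (hO : Ocal (q+1) (l+1) h) (u : Wc (q+1)) :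
    h u (Sum.inr 0) = u (Sum.inr 0) := by
  have hfix : h (bb (q+1) (Sum.inl 0)) = bb (q+1) (Sum.inl 0) := hO.2 0 (by simp)
  calc h u (Sum.inr 0) = wip (q+1) (h u) (bb (q+1) (Sum.inl 0)) := (wip_eval_inl _ _ _).symm
    _ = wip (q+1) (h u) (h (bb (q+1) (Sum.inl 0))) := by rw [hfix]
    _ = wip (q+1) u (bb (q+1) (Sum.inl 0)) := hO.1 _ _
    _ = u (Sum.inr 0) := wip_eval_inl _ _ _

lemma boundary_inl {h : Wc (q+1) ≃ₗ[ℝ] Wc (q+1)} (hO : Ocal (q+1) (l+1) h)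
    (hfix : h (bb (q+1) (Sum.inr 0)) = bb (q+1) (Sum.inr 0)) (u : Wc (q+1)) :
    h u (Sum.inl 0) = u (Sum.inl 0) := by
  calc h u (Sum.inl 0) = wip (q+1) (h u) (bb (q+1) (Sum.inr 0)) := (wip_eval_inr _ _ _).symm
    _ = wip (q+1) (h u) (h (bb (q+1) (Sum.inr 0))) := by rw [hfix]
    _ = wip (q+1) u (bb (q+1) (Sum.inr 0)) := hO.1 _ _
    _ = u (Sum.inl 0) := wip_eval_inr _ _ _


def Ksub (q : ℕ) : Submodule ℝ (Wc (q+1)) where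
  carrier := {u | u (Sum.inl 0) = 0 ∧ u (Sum.inr 0) = 0}
  add_mem' := by
    intro a b ha hb
    exact ⟨by simp [Pi.add_apply, ha.1, hb.1], by simp [Pi.add_apply, ha.2, hb.2]⟩
  zero_mem' := ⟨rfl, rfl⟩
  smul_mem' := by
    intro c a ha
    exact ⟨by simp [Pi.smul_apply, ha.1], by simp [Pi.smul_apply, ha.2]⟩

lemma mem_Ksub {u : Wc (q+1)} : u ∈ Ksub q ↔ u (Sum.inl 0) = 0 ∧ u (Sum.inr 0) = 0 := Iff.rfl

lemma extW_sum (w : Wc q) :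
    extW q w = ∑ i : Fin q, (w (Sum.inl i) • bb (q+1) (Sum.inl i.succ)
      + w (Sum.inr i) • bb (q+1) (Sum.inr i.succ)) := by
  funext s
  rw [Finset.sum_apply]
  rcases s with j | j <;> induction j using Fin.cases <;>
    simp [bb, Fin.succ_inj, Finset.sum_ite_eq', (Fin.succ_ne_zero _)]
  all_goals exact (Finset.sum_eq_zero fun x _ => by simp [(Fin.succ_ne_zero x).symm]).symm

lemma extW_mem_Usub (w : Wc q) : extW q w ∈ Usub q := by
  rw [extW_sum]
  refine Submodule.sum_mem _ fun i _ => Submodule.add_mem _ ?_ ?_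
  · exact Submodule.smul_mem _ _ (Submodule.subset_span (Or.inl ⟨i, rfl⟩))
  · exact Submodule.smul_mem _ _ (Submodule.subset_span (Or.inr ⟨i, rfl⟩))

lemma Usub_eq_Ksub : Usub q = Ksub q := by
  apply le_antisymm
  · rw [Usub, Submodule.span_le]
    rintro v (⟨i, rfl⟩ | ⟨i, rfl⟩) <;>
      exact ⟨by simp [bb, (Fin.succ_ne_zero _).symm], by simp [bb, (Fin.succ_ne_zero _).symm]⟩
  · intro u hu
    rw [mem_Ksub] at hu
    rw [← extW_resV hu.1 hu.2]
    exact extW_mem_Usub _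


lemma mapU {h : Wc (q+1) ≃ₗ[ℝ] Wc (q+1)} (hO : Ocal (q+1) (l+1) h)
    (hfix : h (bb (q+1) (Sum.inr 0)) = bb (q+1) (Sum.inr 0)) :
    Submodule.map h.toLinearMap (Usub q) = Usub q := by
  rw [Usub_eq_Ksub]
  apply le_antisymm
  · rintro _ ⟨u, hu, rfl⟩
    exact ⟨by rw [LinearEquiv.coe_coe, boundary_inl hO hfix]; exact hu.1,
      by rw [LinearEquiv.coe_coe, boundary_inr hO]; exact hu.2⟩
  · intro u hu
    refine ⟨h.symm u, ⟨?_, ?_⟩, by simp⟩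
    · rw [boundary_inl (Ocal.symm hO) (fix_symm hfix)]; exact hu.1
    · rw [boundary_inr (Ocal.symm hO)]; exact hu.2

noncomputable def gammaE {l : ℕ} (h : Wc (q+1) ≃ₗ[ℝ] Wc (q+1)) (hO : Ocal (q+1) (l+1) h)
    (hfix : h (bb (q+1) (Sum.inr 0)) = bb (q+1) (Sum.inr 0)) : Wc q ≃ₗ[ℝ] Wc q where
  toFun := resS q ⇑h
  invFun := resS q ⇑h.symm
  map_add' u v := by
    simp only [resS_eq, extW_add, map_add, resV_add]
  map_smul' a u := by
    simp only [resS_eq, extW_smul, map_smul, resV_smul, RingHom.id_apply]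
  left_inv w := by
    simp only [resS_eq]
    rw [extW_resV (by rw [boundary_inl hO hfix]; simp) (by rw [boundary_inr hO]; simp)]
    simp
  right_inv w := by
    simp only [resS_eq]
    rw [extW_resV (by rw [boundary_inl (Ocal.symm hO) (fix_symm hfix)]; simp)
      (by rw [boundary_inr (Ocal.symm hO)]; simp)]
    simp

lemma gammaE_coe {l : ℕ} (h : Wc (q+1) ≃ₗ[ℝ] Wc (q+1)) (hO : Ocal (q+1) (l+1) h)
    (hfix : h (bb (q+1) (Sum.inr 0)) = bb (q+1) (Sum.inr 0)) :
    ⇑(gammaE h hO hfix) = resS q ⇑h := rfl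

lemma gammaE_Ocal {l : ℕ} (h : Wc (q+1) ≃ₗ[ℝ] Wc (q+1)) (hO : Ocal (q+1) (l+1) h)
    (hfix : h (bb (q+1) (Sum.inr 0)) = bb (q+1) (Sum.inr 0)) :
    Ocal q l (gammaE h hO hfix) := by
  constructor
  · intro w w'
    show wip q (resS q ⇑h w) (resS q ⇑h w') = wip q w w'
    rw [resS_eq, resS_eq]
    calc wip q (resV q (h (extW q w))) (resV q (h (extW q w')))
        = wip (q+1) (h (extW q w)) (h (extW q w')) := by
          rw [wip_split]; simp [boundary_inl hO hfix, boundary_inr hO]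
      _ = wip (q+1) (extW q w) (extW q w') := hO.1 _ _
      _ = wip q w w' := by rw [wip_split]; simp
  · intro i hi
    show resS q ⇑h (bb q (Sum.inl i)) = bb q (Sum.inl i)
    rw [resS_eq, extW_bb_inl, hO.2 i.succ (by rw [Fin.val_succ]; omega), resV_bb_inl_succ]

lemma inj15 {l : ℕ} (h₁ h₂ : Wc (q+1) ≃ₗ[ℝ] Wc (q+1))
    (hO₁ : Ocal (q+1) (l+1) h₁) (hfix₁ : h₁ (bb (q+1) (Sum.inr 0)) = bb (q+1) (Sum.inr 0))
    (hO₂ : Ocal (q+1) (l+1) h₂) (hfix₂ : h₂ (bb (q+1) (Sum.inr 0)) = bb (q+1) (Sum.inr 0))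
    (he : resS q ⇑h₁ = resS q ⇑h₂) : h₁ = h₂ := by
  apply LinearEquiv.ext
  intro u
  have hu' : ∀ (h : Wc (q+1) ≃ₗ[ℝ] Wc (q+1)), Ocal (q+1) (l+1) h →
      h (bb (q+1) (Sum.inr 0)) = bb (q+1) (Sum.inr 0) →
      h (extW q (resV q u)) = extW q (resS q ⇑h (resV q u)) := by
    intro h hO hfix
    rw [resS_eq]
    exact (extW_resV (by rw [boundary_inl hO hfix]; simp) (by rw [boundary_inr hO]; simp)).symm
  conv_lhs => rw [← decomp u]
  conv_rhs => rw [← decomp u]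
  rw [map_add, map_add, map_add, map_add, map_smul, map_smul, map_smul, map_smul,
    hO₁.2 0 (by simp), hO₂.2 0 (by simp), hfix₁, hfix₂,
    hu' h₁ hO₁ hfix₁, hu' h₂ hO₂ hfix₂, he]

noncomputable def hfun (g : Wc q → Wc q) (u : Wc (q+1)) : Wc (q+1) :=
  u (Sum.inl 0) • bb (q+1) (Sum.inl 0) + u (Sum.inr 0) • bb (q+1) (Sum.inr 0)
    + extW q (g (resV q u))

lemma hfun_inl0 (g : Wc q → Wc q) (u : Wc (q+1)) : hfun g u (Sum.inl 0) = u (Sum.inl 0) := by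
  simp [hfun, bb]

lemma hfun_inr0 (g : Wc q → Wc q) (u : Wc (q+1)) : hfun g u (Sum.inr 0) = u (Sum.inr 0) := by
  simp [hfun, bb]

lemma resV_hfun (g : Wc q → Wc q) (u : Wc (q+1)) : resV q (hfun g u) = g (resV q u) := by
  simp [hfun, resV_add, resV_smul]

lemma hfun_hfun (g g' : Wc q → Wc q) (u : Wc (q+1))
    (hgg' : g' (g (resV q u)) = resV q u) : hfun g' (hfun g u) = u := by
  rw [hfun, hfun_inl0, hfun_inr0, resV_hfun, hgg']
  exact decomp u

noncomputable def hE (γ : Wc q ≃ₗ[ℝ] Wc q) : Wc (q+1) ≃ₗ[ℝ] Wc (q+1) where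
  toFun := hfun ⇑γ
  invFun := hfun ⇑γ.symm
  map_add' u v := by
    simp only [hfun, Pi.add_apply, resV_add, map_add, extW_add, add_smul]
    abel
  map_smul' a u := by
    simp only [hfun, Pi.smul_apply, resV_smul, map_smul, extW_smul, smul_eq_mul, mul_smul,
      RingHom.id_apply, smul_add]
  left_inv u := hfun_hfun _ _ _ (by simp)
  right_inv u := hfun_hfun _ _ _ (by simp)

lemma hE_coe (γ : Wc q ≃ₗ[ℝ] Wc q) : ⇑(hE γ) = hfun ⇑γ := rfl

lemma hE_Ocal {l : ℕ} (γ : Wc q ≃ₗ[ℝ] Wc q) (hOγ : Ocal q l γ) :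
    Ocal (q+1) (l+1) (hE γ) := by
  constructor
  · intro u v
    rw [hE_coe, wip_split, wip_split, hfun_inl0, hfun_inr0, hfun_inl0, hfun_inr0,
      resV_hfun, resV_hfun, hOγ.1]
  · intro i hi
    rw [hE_coe]
    induction i using Fin.cases with
    | zero =>
      rw [hfun, resV_bb_inl_zero, map_zero, extW_zero]
      funext s; simp [bb]
    | succ j =>
      rw [hfun, resV_bb_inl_succ, hOγ.2 j (by rw [Fin.val_succ] at hi; omega), extW_bb_inl]
      funext s; simp [bb, (Fin.succ_ne_zero j).symm]

lemma hE_fix (γ : Wc q ≃ₗ[ℝ] Wc q) :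
    hE γ (bb (q+1) (Sum.inr 0)) = bb (q+1) (Sum.inr 0) := by
  rw [hE_coe, hfun, resV_bb_inr_zero, map_zero, extW_zero]
  funext s; simp [bb]

lemma resS_hE (γ : Wc q ≃ₗ[ℝ] Wc q) : resS q ⇑(hE γ) = ⇑γ := by
  funext w
  rw [resS_eq, hE_coe, resV_hfun, resV_extW]


lemma mult15 {l : ℕ} (h₁ h₂ : Wc (q+1) ≃ₗ[ℝ] Wc (q+1))
    (hO₁ : Ocal (q+1) (l+1) h₁) (hfix₁ : h₁ (bb (q+1) (Sum.inr 0)) = bb (q+1) (Sum.inr 0))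
    (hO₂ : Ocal (q+1) (l+1) h₂) (hfix₂ : h₂ (bb (q+1) (Sum.inr 0)) = bb (q+1) (Sum.inr 0)) :
    resS q (⇑h₁ ∘ ⇑h₂) = resS q ⇑h₁ ∘ resS q ⇑h₂ := by
  funext w
  have e : extW q (resS q ⇑h₂ w) = h₂ (extW q w) := by
    rw [resS_eq]
    exact extW_resV (by rw [boundary_inl hO₂ hfix₂]; simp) (by rw [boundary_inr hO₂]; simp)
  simp only [Function.comp_apply]
  rw [resS_eq (⇑h₁ ∘ ⇑h₂) w, resS_eq ⇑h₁ (resS q ⇑h₂ w), e]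
  rfl

end S15

/-- here stated with `p = q+1 ≥ 2` and `k = l+1`, `1 ≤ k ≤ p`:
any `h ∈ 𝒪(p,k)` with `hβ̃₁ = β̃₁` maps `U = Span{β_2,…,β_p,β̃_2,…,β̃_p}` onto itself,
and `h ↦ h|_U` is a group isomorphism from `{h ∈ 𝒪(p,k) : hβ̃₁ = β̃₁}` onto
`𝒪(p−1,k−1)` (formed on U with the relabeled basis): it lands in `𝒪(p−1,k−1)`,
is injective, surjective, and multiplicative. -/
theorem statement15 (q l : ℕ) (hq : 1 ≤ q) (hl : l ≤ q) :
    (∀ h : Wc (q + 1) ≃ₗ[ℝ] Wc (q + 1), Ocal (q + 1) (l + 1) h →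
        h (bb (q + 1) (Sum.inr 0)) = bb (q + 1) (Sum.inr 0) →
        Submodule.map h.toLinearMap (Usub q) = Usub q) ∧
    (∀ h : Wc (q + 1) ≃ₗ[ℝ] Wc (q + 1), Ocal (q + 1) (l + 1) h →
        h (bb (q + 1) (Sum.inr 0)) = bb (q + 1) (Sum.inr 0) →
        ∃ γ : Wc q ≃ₗ[ℝ] Wc q, ⇑γ = resS q ⇑h ∧ Ocal q l γ) ∧
    (∀ h₁ h₂ : Wc (q + 1) ≃ₗ[ℝ] Wc (q + 1),
        Ocal (q + 1) (l + 1) h₁ → h₁ (bb (q + 1) (Sum.inr 0)) = bb (q + 1) (Sum.inr 0) →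
        Ocal (q + 1) (l + 1) h₂ → h₂ (bb (q + 1) (Sum.inr 0)) = bb (q + 1) (Sum.inr 0) →
        resS q ⇑h₁ = resS q ⇑h₂ → h₁ = h₂) ∧
    (∀ γ : Wc q ≃ₗ[ℝ] Wc q, Ocal q l γ →
        ∃ h : Wc (q + 1) ≃ₗ[ℝ] Wc (q + 1),
          (Ocal (q + 1) (l + 1) h ∧
            h (bb (q + 1) (Sum.inr 0)) = bb (q + 1) (Sum.inr 0)) ∧
          resS q ⇑h = ⇑γ) ∧
    (∀ h₁ h₂ : Wc (q + 1) ≃ₗ[ℝ] Wc (q + 1),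
        Ocal (q + 1) (l + 1) h₁ → h₁ (bb (q + 1) (Sum.inr 0)) = bb (q + 1) (Sum.inr 0) →
        Ocal (q + 1) (l + 1) h₂ → h₂ (bb (q + 1) (Sum.inr 0)) = bb (q + 1) (Sum.inr 0) →
        resS q (⇑h₁ ∘ ⇑h₂) = resS q ⇑h₁ ∘ resS q ⇑h₂) := by
  refine ⟨?_, ?_, ?_, ?_, ?_⟩
  · intro h hO hfix; exact S15.mapU hO hfix
  · intro h hO hfix
    exact ⟨S15.gammaE h hO hfix, S15.gammaE_coe h hO hfix, S15.gammaE_Ocal h hO hfix⟩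
  · exact fun h₁ h₂ a b c d e => S15.inj15 h₁ h₂ a b c d e
  · intro γ hOγ
    exact ⟨S15.hE γ, ⟨S15.hE_Ocal γ hOγ, S15.hE_fix γ⟩, S15.resS_hE γ⟩
  · exact fun h₁ h₂ a b c d => S15.mult15 h₁ h₂ a b c d
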